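/- arXiv:2509.06914 — 2 statements merged into one kernel-verified Lean document; each statement's English description precedes it below -/
import Mathlib

section
/- Let Λ be a Coxeter diagram on vertex set S with Artin group A_Λ. Let S₁, S₂, S₃ ⊆ S and g₁, g₂, g₃ ∈ A_Λ. Suppose that for every s₁ ∈ S₁∖S₂ and every s₃ ∈ S₃∖S₂, the vertices s₁ and s₃ lie in distinct connected components of the subdiagram of Λ induced on S∖S₂ (whose edges are the pairs with label ≥ 3). If g₁·A_{S∖S₁} ∩ g₂·A_{S∖S₂} ≠ ∅ and g₂·A_{S∖S₂} ∩ g₃·A_{S∖S₃} ≠ ∅, then g₁·A_{S∖S₁} ∩ g₃·A_{S∖S₃} ≠ ∅. -/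
open scoped Pointwise

namespace ArtinKpi1

/-- The alternating word `s t s t ⋯` of length `m`, as an element of the free group. -/
def altWord {S : Type*} (s t : S) (m : ℕ) : FreeGroup S :=
  ((List.range m).map fun i => FreeGroup.of (if i % 2 = 0 then s else t)).prod

/-- The braid/Artin relations associated to a Coxeter matrix (the entry `0` encodes `∞`,
in which case there is no relation for the corresponding pair of generators). -/
def artinRelationsSet {S : Type*} (M : CoxeterMatrix S) : Set (FreeGroup S) :=
  {r | ∃ s t : S, s ≠ t ∧ M s t ≠ 0 ∧ r = altWord s t (M s t) * (altWord t s (M s t))⁻¹}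

/-- The Artin group of a Coxeter diagram. -/
abbrev ArtinGroup {S : Type*} (M : CoxeterMatrix S) : Type _ :=
  PresentedGroup (artinRelationsSet M)

/-- The standard generators of the Artin group. -/
def agen {S : Type*} (M : CoxeterMatrix S) (s : S) : ArtinGroup M :=
  PresentedGroup.of s

/-- The standard parabolic subgroup `A_T` of the Artin group. -/
def parabolic {S : Type*} (M : CoxeterMatrix S) (T : Set S) : Subgroup (ArtinGroup M) :=
  Subgroup.closure (agen M '' T)

/-- The left coset `g • A_T` of a standard parabolic subgroup, as a set. -/
def parCoset {S : Type*} (M : CoxeterMatrix S) (T : Set S) (g : ArtinGroup M) :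
    Set (ArtinGroup M) :=
  g • (parabolic M T : Set (ArtinGroup M))

/-- `X` is a vertex of type `ŝ` of the Artin complex of `M`:
a left coset of `A_{S ∖ {s}}`. -/
def IsVertexOfType {S : Type*} (M : CoxeterMatrix S) (s : S) (X : Set (ArtinGroup M)) : Prop :=
  ∃ g : ArtinGroup M, X = parCoset M {t | t ≠ s} g

/-- Adjacency of vertices of the Artin complex: the two cosets are distinct and intersect. -/
def VAdj {S : Type*} (M : CoxeterMatrix S) (X Y : Set (ArtinGroup M)) : Prop :=
  X ≠ Y ∧ (X ∩ Y).Nonempty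

/-- The coset graph `Δ_{Λ,st}`: vertices are the left cosets of `A_{ŝ}` and of `A_{t̂}`,
two of them being adjacent when they intersect. -/
def DeltaEdge {S : Type*} (M : CoxeterMatrix S) (s t : S) :
    SimpleGraph {X : Set (ArtinGroup M) // IsVertexOfType M s X ∨ IsVertexOfType M t X} where
  Adj X Y := X.1 ≠ Y.1 ∧ (X.1 ∩ Y.1).Nonempty
  symm := by
    constructor
    rintro X Y ⟨h1, h2⟩
    exact ⟨h1.symm, by rwa [Set.inter_comm]⟩
  loopless := by constructor; rintro X ⟨h1, _⟩; exact h1 rfl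

/-- `s t` is an edge of the Coxeter diagram: the label is at least `3`
(where the label `0` encodes `∞`). -/
def IsEdge {S : Type*} (M : CoxeterMatrix S) (s t : S) : Prop :=
  s ≠ t ∧ (M s t = 0 ∨ 3 ≤ M s t)

/-- `Λ` satisfies the girth condition: for every edge `st` of `Λ`, the graph `Δ_{Λ,st}`
has girth at least `6`, i.e. it has no cycle on `3`, `4` or `5` distinct vertices. -/
def GirthCondition {S : Type*} (M : CoxeterMatrix S) : Prop :=
  ∀ s t : S, IsEdge M s t → 6 ≤ (DeltaEdge M s t).egirth

/-- The restriction of a Coxeter matrix to a subset of the vertices (an induced subdiagram). -/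
def restrictSet {S : Type*} (M : CoxeterMatrix S) (T : Set S) : CoxeterMatrix T where
  M := Matrix.of fun a b => M a b
  isSymm := Matrix.IsSymm.ext fun a b => M.symmetric b a
  diagonal := fun a => M.diagonal a
  off_diagonal := fun a b h => M.off_diagonal a b fun he => h (Subtype.ext he)

/-- A subset `T` of the vertices is spherical if the Coxeter group of the induced
subdiagram is finite. -/
def IsSpherical {S : Type*} (M : CoxeterMatrix S) (T : Set S) : Prop :=
  Finite (restrictSet M T).Group


/-- The subdiagram of the Coxeter diagram induced on a subset `T` of the vertices, viewed
as a simple graph: two vertices are adjacent iff their label is at least `3` (where `0`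
encodes `∞`). -/
def diagramGraph {S : Type*} (M : CoxeterMatrix S) (T : Set S) : SimpleGraph T where
  Adj a b := a ≠ b ∧ (M a b = 0 ∨ 3 ≤ M a b)
  symm := by
    constructor
    rintro a b ⟨hab, h⟩
    exact ⟨hab.symm, by rwa [M.symmetric b a]⟩
  loopless := by constructor; rintro a ⟨h, _⟩; exact h rfl

/-! Let `U` be the union of the components of the diagram on `S ∖ S₂` that meet `S₁`. No edge
joins `U` to the rest of `S ∖ S₂`, so their generators commute and
`A_{S∖S₂} = A_{(S∖S₂)∖U} · A_U`, where the first factor lies in `A_{S∖S₁}` and, by the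
separation hypothesis, the second lies in `A_{S∖S₃}`. Given `x ∈ g₁A_{S∖S₁} ∩ g₂A_{S∖S₂}` and
`y ∈ g₂A_{S∖S₂} ∩ g₃A_{S∖S₃}`, write `x⁻¹y = uv` accordingly: then `xu = yv⁻¹` lies in both
`g₁A_{S∖S₁}` and `g₃A_{S∖S₃}`. -/

section Cosets

variable {G : Type*} [Group G]

lemma coe_closure_union_of_commute {A B : Set G} (h : ∀ a ∈ A, ∀ b ∈ B, Commute a b) :
    (Subgroup.closure (A ∪ B) : Set G) = Subgroup.closure A * Subgroup.closure B := by
  rw [Subgroup.closure_union, Subgroup.coe_mul_of_left_le_normalizer_right]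
  refine le_trans ?_ (Subgroup.centralizer_le_normalizer _)
  rw [Subgroup.centralizer_closure, Subgroup.closure_le]
  exact fun a ha b hb => (h a ha b hb).symm

lemma smul_inter_smul_nonempty_of_subset_mul {H₁ H₂ H₃ : Subgroup G}
    (hH : (H₂ : Set G) ⊆ H₁ * H₃) {g₁ g₂ g₃ : G}
    (h12 : (g₁ • (H₁ : Set G) ∩ g₂ • (H₂ : Set G)).Nonempty)
    (h23 : (g₂ • (H₂ : Set G) ∩ g₃ • (H₃ : Set G)).Nonempty) :
    (g₁ • (H₁ : Set G) ∩ g₃ • (H₃ : Set G)).Nonempty := by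
  obtain ⟨x, hx1, hx2⟩ := h12
  obtain ⟨y, hy2, hy3⟩ := h23
  simp only [Set.mem_smul_set_iff_inv_smul_mem, smul_eq_mul, SetLike.mem_coe] at hx1 hx2 hy2 hy3
  obtain ⟨u, hu, v, hv, huv : u * v = x⁻¹ * y⟩ := hH (show x⁻¹ * y ∈ H₂ by
    simpa [mul_assoc] using mul_mem (inv_mem hx2) hy2)
  have hxu : x * u = y * v⁻¹ := by rw [eq_mul_inv_iff_mul_eq, mul_assoc, huv, mul_inv_cancel_left]
  refine ⟨x * u, ?_, ?_⟩ <;> rw [Set.mem_smul_set_iff_inv_smul_mem, smul_eq_mul, SetLike.mem_coe]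
  · simpa [mul_assoc] using mul_mem hx1 hu
  · simpa [hxu, mul_assoc] using mul_mem hy3 (inv_mem hv)

end Cosets

section Parabolic

variable {S : Type*} (M : CoxeterMatrix S)

lemma altWord_two (s t : S) : altWord s t 2 = FreeGroup.of s * FreeGroup.of t := by
  simp [altWord, List.range_succ]

lemma agen_commute {s t : S} (h : M s t = 2) : Commute (agen M s) (agen M t) := by
  have hst : s ≠ t := by rintro rfl; simp at h
  have hrel : altWord s t (M s t) * (altWord t s (M s t))⁻¹ ∈ artinRelationsSet M :=
    ⟨s, t, hst, by omega, rfl⟩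
  have hbraid := PresentedGroup.mk_eq_mk_of_mul_inv_mem hrel
  rw [h, altWord_two, altWord_two, map_mul, map_mul] at hbraid
  exact hbraid

lemma parabolic_mono {T U : Set S} (h : T ⊆ U) : parabolic M T ≤ parabolic M U :=
  Subgroup.closure_mono (Set.image_mono h)

lemma coe_parabolic_union {T U : Set S} (h : ∀ s ∈ T, ∀ t ∈ U, M s t = 2) :
    (parabolic M (T ∪ U) : Set (ArtinGroup M)) = parabolic M T * parabolic M U := by
  rw [parabolic, Set.image_union, coe_closure_union_of_commute]
  · rfl
  rintro _ ⟨s, hs, rfl⟩ _ ⟨t, ht, rfl⟩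
  exact agen_commute M (h s hs t ht)

lemma label_eq_two_of_not_reachable {T : Set S} {a b : T}
    (h : ¬ (diagramGraph M T).Reachable a b) : M a b = 2 := by
  have hab : a.1 ≠ b.1 := fun he => h (Subtype.ext he ▸ .refl a)
  have hne_one := M.off_diagonal a b hab
  have hnot_edge : ¬ (M a b = 0 ∨ 3 ≤ M a b) := fun hl => h ⟨.cons ⟨Subtype.coe_ne_coe.mp hab, hl⟩ .nil⟩
  omega

lemma coe_parabolic_eq_mul_of_reachable_closed {T U : Set S}
    (hU : ∀ a b : T, (diagramGraph M T).Reachable a b → a.1 ∈ U → b.1 ∈ U) :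
    (parabolic M T : Set (ArtinGroup M)) = parabolic M (T \ U) * parabolic M (T ∩ U) := by
  conv_lhs => rw [← Set.sdiff_union_inter T U]
  refine coe_parabolic_union M fun s hs t ht => ?_
  refine label_eq_two_of_not_reachable (a := ⟨s, hs.1⟩) (b := ⟨t, ht.1⟩) M fun hst => ?_
  exact hs.2 (hU _ _ hst.symm ht.2)

end Parabolic

/-- Let `S₁, S₂, S₃ ⊆ S` and `g₁, g₂, g₃ ∈ A_Λ`. If every
`s₁ ∈ S₁ ∖ S₂` and every `s₃ ∈ S₃ ∖ S₂` lie in distinct connected components of the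
subdiagram of `Λ` induced on `S ∖ S₂`, and the cosets `g₁·A_{S∖S₁}` and `g₂·A_{S∖S₂}`
intersect, and the cosets `g₂·A_{S∖S₂}` and `g₃·A_{S∖S₃}` intersect, then the cosets
`g₁·A_{S∖S₁}` and `g₃·A_{S∖S₃}` intersect. -/
theorem coset_intersection_transitive {S : Type*} (M : CoxeterMatrix S)
    (S₁ S₂ S₃ : Set S) (g₁ g₂ g₃ : ArtinGroup M)
    (hsep : ∀ s₁ (hs₁ : s₁ ∈ S₁ \ S₂) s₃ (hs₃ : s₃ ∈ S₃ \ S₂),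
      ¬ (diagramGraph M S₂ᶜ).Reachable ⟨s₁, hs₁.2⟩ ⟨s₃, hs₃.2⟩)
    (h12 : (parCoset M S₁ᶜ g₁ ∩ parCoset M S₂ᶜ g₂).Nonempty)
    (h23 : (parCoset M S₂ᶜ g₂ ∩ parCoset M S₃ᶜ g₃).Nonempty) :
    (parCoset M S₁ᶜ g₁ ∩ parCoset M S₃ᶜ g₃).Nonempty := by
  set U : Set S := {t | ∃ s ∈ S₁, ∃ (hs : s ∈ S₂ᶜ) (ht : t ∈ S₂ᶜ),
    (diagramGraph M S₂ᶜ).Reachable ⟨s, hs⟩ ⟨t, ht⟩}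
  have hU : ∀ a b : (S₂ᶜ : Set S), (diagramGraph M S₂ᶜ).Reachable a b → a.1 ∈ U → b.1 ∈ U := by
    rintro a b hab ⟨s, hs₁, hs, _, hsa⟩
    exact ⟨s, hs₁, hs, b.2, hsa.trans hab⟩
  have hS₁ : S₂ᶜ \ U ⊆ S₁ᶜ := fun s ⟨hs, hsU⟩ hs₁ => hsU ⟨s, hs₁, hs, hs, .rfl⟩
  have hS₃ : S₂ᶜ ∩ U ⊆ S₃ᶜ := fun t ⟨ht, s, hs₁, hs, _, hst⟩ ht₃ =>
    hsep s ⟨hs₁, hs⟩ t ⟨ht₃, ht⟩ hst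
  refine smul_inter_smul_nonempty_of_subset_mul ?_ h12 h23
  rw [coe_parabolic_eq_mul_of_reachable_closed M hU]
  exact Set.mul_subset_mul (parabolic_mono M hS₁) (parabolic_mono M hS₃)

end ArtinKpi1
end

section
/- Let G be a simple graph such that: (1) G has diameter at most 2, i.e., any two distinct vertices are adjacent or have a common neighbour; (2) G has no induced embedded 4-cycles, i.e., for any four distinct vertices a,b,c,d with ab, bc, cd, da all edges, at least one of ac, bd is an edge; (3) every induced embedded 5-cycle of G (five distinct vertices v₁,…,v₅ such that v_i is adjacent to v_j iff i−j ≡ ±1 mod 5) has a vertex adjacent to all five of its vertices. Let A₁ and A₂ be finite sets of vertices each of which is pairwise adjacent (finite cliques). Then there exists a vertex a of G that is adjacent to or equal to every element of A₁ ∪ A₂. -/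
private lemma pentagon_pack {V : Type*} (G : SimpleGraph V) (u a w v z : V)
    (hua : G.Adj u a) (haw : G.Adj a w) (hwv : G.Adj w v) (hvz : G.Adj v z) (hzu : G.Adj z u)
    (huw : ¬ G.Adj u w) (huv : ¬ G.Adj u v) (hav : ¬ G.Adj a v) (haz : ¬ G.Adj a z)
    (hwz : ¬ G.Adj w z)
    (nuw : u ≠ w) (nuv : u ≠ v) (nav : a ≠ v) (naz : a ≠ z) (nwz : w ≠ z) :
    Function.Injective ![u, a, w, v, z] ∧
    (∀ i j : Fin 5, G.Adj (![u, a, w, v, z] i) (![u, a, w, v, z] j) ↔ (j = i + 1 ∨ i = j + 1)) := by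
  have nua := hua.ne
  have naw := haw.ne
  have nwv := hwv.ne
  have nvz := hvz.ne
  have nzu := hzu.ne
  constructor
  · intro i j hij
    fin_cases i <;> fin_cases j <;> simp_all
  · intro i j
    fin_cases i <;> fin_cases j <;>
      simp_all [G.adj_comm, G.irrefl, Fin.ext_iff] <;> decide

/-- Let `G` be a simple graph of diameter at most `2`, with no induced
embedded `4`-cycles, and in which every induced embedded `5`-cycle has a common neighbour.
Then any two finite cliques `A₁, A₂` have a vertex adjacent to or equal to every element
of `A₁ ∪ A₂`. -/
theorem cliques_have_common_neighbour {V : Type*} [Nonempty V] (G : SimpleGraph V)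
    (hdiam : ∀ u v : V, u ≠ v → G.Adj u v ∨ ∃ w, G.Adj u w ∧ G.Adj w v)
    (hsquare : ∀ a b c d : V, a ≠ b → a ≠ c → a ≠ d → b ≠ c → b ≠ d → c ≠ d →
      G.Adj a b → G.Adj b c → G.Adj c d → G.Adj d a → G.Adj a c ∨ G.Adj b d)
    (hpentagon : ∀ v : Fin 5 → V, Function.Injective v →
      (∀ i j : Fin 5, G.Adj (v i) (v j) ↔ (j = i + 1 ∨ i = j + 1)) →
      ∃ w : V, ∀ i, G.Adj w (v i))
    (A₁ A₂ : Finset V)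
    (hA₁ : ∀ x ∈ A₁, ∀ y ∈ A₁, x ≠ y → G.Adj x y)
    (hA₂ : ∀ x ∈ A₂, ∀ y ∈ A₂, x ≠ y → G.Adj x y) :
    ∃ a : V, ∀ x : V, (x ∈ A₁ ∨ x ∈ A₂) → a = x ∨ G.Adj a x := by
  classical
  -- Lemma 1: a common neighbour of two nonadjacent dominators of a clique dominates the clique
  have lem1 : ∀ (x y w : V) (C : Finset V), (∀ p ∈ C, ∀ q ∈ C, p ≠ q → G.Adj p q) →
      x ≠ y → ¬ G.Adj x y → (∀ c ∈ C, x = c ∨ G.Adj x c) → (∀ c ∈ C, y = c ∨ G.Adj y c) →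
      G.Adj x w → G.Adj w y → ∀ c ∈ C, w = c ∨ G.Adj w c := by
    intro x y w C hC hxy hnxy hx hy hxw hwy c hc
    by_cases hwc : w = c
    · exact Or.inl hwc
    right
    rcases hx c hc with rfl | hxc
    · exact hxw.symm
    rcases hy c hc with rfl | hyc
    · exact hwy
    rcases hsquare x c y w hxc.ne hxy hxw.ne (fun h => hnxy (h ▸ hxc)) (Ne.symm hwc)
        hwy.ne.symm hxc hyc.symm hwy.symm hxw.symm with h | h
    · exact absurd h hnxy
    · exact h.symm
  suffices H : ∀ (A₂' : Finset V), (∀ x ∈ A₂', ∀ y ∈ A₂', x ≠ y → G.Adj x y) →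
      ∃ a : V, ∀ x : V, (x ∈ A₁ ∨ x ∈ A₂') → a = x ∨ G.Adj a x from H A₂ hA₂
  intro A₂'
  induction A₂' using Finset.induction_on with
  | empty =>
    intro _
    rcases A₁.eq_empty_or_nonempty with rfl | ⟨a, ha⟩
    · exact ⟨Classical.arbitrary V, by simp⟩
    · refine ⟨a, fun x hx => ?_⟩
      rcases hx with hx | hx
      · by_cases h : a = x
        · exact Or.inl h
        · exact Or.inr (hA₁ a ha x hx h)
      · simp at hx
  | @insert v B hvB ih =>
    intro hcl
    have hclB : ∀ x ∈ B, ∀ y ∈ B, x ≠ y → G.Adj x y := fun x hx y hy =>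
      hcl x (Finset.mem_insert_of_mem hx) y (Finset.mem_insert_of_mem hy)
    obtain ⟨a, ha⟩ := ih hclB
    by_cases hav : a = v ∨ G.Adj a v
    · refine ⟨a, fun x hx => ?_⟩
      rcases hx with hx | hx
      · exact ha x (Or.inl hx)
      · rcases Finset.mem_insert.mp hx with rfl | hx
        · exact hav
        · exact ha x (Or.inr hx)
    push_neg at hav
    obtain ⟨hne, hnav⟩ := hav
    have hvB' : ∀ b ∈ B, G.Adj v b := fun b hb =>
      hcl v (Finset.mem_insert_self v B) b (Finset.mem_insert_of_mem hb)
        (fun h => hvB (h ▸ hb))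
    have haB : ∀ b ∈ B, a = b ∨ G.Adj a b := fun b hb => ha b (Or.inr hb)
    have haA₁ : ∀ u ∈ A₁, a = u ∨ G.Adj a u := fun u hu => ha u (Or.inl hu)
    -- inner induction
    have inner : ∀ n : ℕ, ∀ w : V, G.Adj a w → G.Adj w v → (∀ b ∈ B, w = b ∨ G.Adj w b) →
        (A₁.filter fun u => ¬(w = u ∨ G.Adj w u)).card ≤ n →
        ∃ z : V, ∀ x : V, (x ∈ A₁ ∨ x ∈ insert v B) → z = x ∨ G.Adj z x := by
      intro n
      induction n with
      | zero =>
        intro w hw1 hw2 hwB hcard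
        refine ⟨w, fun x hx => ?_⟩
        rcases hx with hx | hx
        · by_contra hc
          have : x ∈ A₁.filter fun u => ¬(w = u ∨ G.Adj w u) :=
            Finset.mem_filter.mpr ⟨hx, hc⟩
          have := Finset.card_pos.mpr ⟨x, this⟩
          omega
        · rcases Finset.mem_insert.mp hx with rfl | hx
          · exact Or.inr hw2
          · exact hwB x hx
      | succ n ihn =>
        intro w hw1 hw2 hwB hcard
        by_cases hall : ∀ u ∈ A₁, w = u ∨ G.Adj w u
        · refine ⟨w, fun x hx => ?_⟩
          rcases hx with hx | hx
          · exact hall x hx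
          · rcases Finset.mem_insert.mp hx with rfl | hx
            · exact Or.inr hw2
            · exact hwB x hx
        push_neg at hall
        obtain ⟨u, huA, hu1, hu2⟩ := hall
        have hau : G.Adj a u := by
          rcases haA₁ u huA with rfl | h
          · exact absurd hw1.symm hu2
          · exact h
        have huv_ne : u ≠ v := fun h => hu2 (by rw [h]; exact hw2)
        have hnuv : ¬ G.Adj u v := by
          intro h
          rcases hsquare u a w v hau.ne' (Ne.symm hu1) huv_ne hw1.ne hne hw2.ne
            hau.symm hw1 hw2 h.symm with h' | h'
          · exact hu2 h'.symm
          · exact hnav h'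
        rcases hdiam u v huv_ne with h | ⟨z, hz1, hz2⟩
        · exact absurd h hnuv
        have hz_ne_a : z ≠ a := fun h => hnav (h ▸ hz2)
        have hz_ne_w : z ≠ w := fun h => hu2 (h ▸ hz1).symm
        -- construct z₀ with the four adjacencies
        obtain ⟨z₀, hz₀a, hz₀v, hz₀w, hz₀u⟩ :
            ∃ z₀ : V, G.Adj a z₀ ∧ G.Adj z₀ v ∧ G.Adj z₀ w ∧ G.Adj z₀ u := by
          by_cases hza : G.Adj z a
          · have hzw : G.Adj z w := by
              rcases hsquare z a w v hz_ne_a hz_ne_w hz2.ne hw1.ne hne hw2.ne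
                hza hw1 hw2 hz2.symm with h | h
              · exact h
              · exact absurd h hnav
            exact ⟨z, hza.symm, hz2, hzw, hz1.symm⟩
          · have hzw : ¬ G.Adj z w := by
              intro h
              rcases hsquare u a w z hau.ne' (Ne.symm hu1) hz1.ne hw1.ne
                (Ne.symm hz_ne_a) (Ne.symm hz_ne_w) hau.symm hw1 h.symm hz1.symm with h' | h'
              · exact hu2 h'.symm
              · exact hza h'.symm
            have hnaz : ¬ G.Adj a z := fun h => hza h.symm
            have hnwz : ¬ G.Adj w z := fun h => hzw h.symm
            have hnuw : ¬ G.Adj u w := fun h => hu2 h.symm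
            have nua := hau.ne'
            have naw := hw1.ne
            have nwv := hw2.ne
            have nvz := hz2.ne'
            have nzu := hz1.ne'
            have nuw : u ≠ w := Ne.symm hu1
            have naz : a ≠ z := Ne.symm hz_ne_a
            have nwz : w ≠ z := Ne.symm hz_ne_w
            have nuv := huv_ne
            have nav := hne
            have hua : G.Adj u a := hau.symm
            have haw : G.Adj a w := hw1
            have hwv : G.Adj w v := hw2
            have hvz : G.Adj v z := hz2.symm
            have hzu : G.Adj z u := hz1.symm
            obtain ⟨hinj, hiff⟩ := pentagon_pack G u a w v z hua haw hwv hvz hzu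
              hnuw hnuv hnav hnaz hnwz nuw nuv nav naz nwz
            obtain ⟨p, hp⟩ := hpentagon ![u, a, w, v, z] hinj hiff
            exact ⟨p, (hp 1).symm, hp 3, hp 2, hp 0⟩
        -- z₀ dominates B
        have hz₀B : ∀ b ∈ B, z₀ = b ∨ G.Adj z₀ b :=
          lem1 a v z₀ B hclB hne hnav haB (fun b hb => Or.inr (hvB' b hb)) hz₀a hz₀v
        -- z₀ dominates everything in A₁ that w dominated
        have hmono : ∀ u' ∈ A₁, (w = u' ∨ G.Adj w u') → (z₀ = u' ∨ G.Adj z₀ u') := by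
          intro u' hu' h'
          by_cases hzu' : z₀ = u'
          · exact Or.inl hzu'
          right
          rcases h' with rfl | hwu'
          · exact hz₀w
          by_cases huu' : u = u'
          · exact huu' ▸ hz₀u
          rcases hsquare z₀ w u' u hz₀w.ne hzu' hz₀u.ne hwu'.ne hu1 (fun h => huu' h.symm)
            hz₀w hwu' (hA₁ u' hu' u huA (Ne.symm huu')) hz₀u.symm with h | h
          · exact h
          · exact absurd h hu2
        -- cardinality decrease
        have hsub : (A₁.filter fun x => ¬(z₀ = x ∨ G.Adj z₀ x)) ⊆
            (A₁.filter fun x => ¬(w = x ∨ G.Adj w x)).erase u := by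
          intro x hx
          rw [Finset.mem_filter] at hx
          refine Finset.mem_erase.mpr ⟨?_, Finset.mem_filter.mpr ⟨hx.1, ?_⟩⟩
          · intro h
            exact hx.2 (Or.inr (h ▸ hz₀u))
          · intro h
            exact hx.2 (hmono x hx.1 h)
        have hmemu : u ∈ A₁.filter fun x => ¬(w = x ∨ G.Adj w x) :=
          Finset.mem_filter.mpr ⟨huA, by push_neg; exact ⟨hu1, hu2⟩⟩
        have hcard' : (A₁.filter fun x => ¬(z₀ = x ∨ G.Adj z₀ x)).card ≤ n := by
          have h1 := Finset.card_le_card hsub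
          have h2 := Finset.card_erase_of_mem hmemu
          have h3 := Finset.card_pos.mpr ⟨u, hmemu⟩
          omega
        exact ihn z₀ hz₀a hz₀v hz₀B hcard'
    rcases hdiam a v hne with h | ⟨w, hw1, hw2⟩
    · exact absurd h hnav
    exact inner _ w hw1 hw2
      (lem1 a v w B hclB hne hnav haB (fun b hb => Or.inr (hvB' b hb)) hw1 hw2) le_rfl
end
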